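/- Let X = UUᵀ and X* = U*(U*)ᵀ with U, U* ∈ ℝ^{n×r}. If Dist(U, U*) ≤ ρ·σ_r(U*) for some ρ > 0, then ‖X − X*‖_F ≤ (2 + ρ)·ρ·‖U*‖₂·σ_r(U*). -/

import Mathlib

/-!
For any orthogonal `R`, put `N = U* R` and `Δ = U - N`. Since `N Nᵀ = U* U*ᵀ`,
`U Uᵀ - U* U*ᵀ = Δ Nᵀ + N Δᵀ + Δ Δᵀ`, and each cross term has Frobenius norm at most
`‖N‖₂ ‖Δ‖_F = ‖U*‖₂ ‖Δ‖_F`, so `‖U Uᵀ - U* U*ᵀ‖_F ≤ 2 ‖U*‖₂ d + d²` with `d = ‖U - U* R‖_F`.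
Passing to the infimum over `R` and using `d ≤ ρ σ_r(U*) ≤ ρ ‖U*‖₂` gives the bound.
-/

open Matrix

noncomputable def vnorm {m : Type*} [Fintype m] (v : m → ℝ) : ℝ :=
  Real.sqrt (∑ i, v i ^ 2)

noncomputable def frob {m n : Type*} [Fintype m] [Fintype n] (A : Matrix m n ℝ) : ℝ :=
  Real.sqrt (∑ i, ∑ j, A i j ^ 2)

/-- The spectral norm (largest singular value) of a real matrix. -/
noncomputable def specNorm {m n : Type*} [Fintype m] [Fintype n] (A : Matrix m n ℝ) : ℝ :=
  sSup {c | ∃ x : n → ℝ, vnorm x = 1 ∧ c = vnorm (A.mulVec x)}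

/-- The smallest singular value of a real matrix. -/
noncomputable def sigMin {m n : Type*} [Fintype m] [Fintype n] (A : Matrix m n ℝ) : ℝ :=
  sInf {c | ∃ x : n → ℝ, vnorm x = 1 ∧ c = vnorm (A.mulVec x)}

/-- `Dist U V`: the infimum of `‖U - V R‖_F` over orthogonal `R`. -/
noncomputable def FDist {n r : Type*} [Fintype n] [Fintype r] [DecidableEq r]
    (U V : Matrix n r ℝ) : ℝ :=
  sInf {c | ∃ R : Matrix r r ℝ, Rᵀ * R = 1 ∧ c = frob (U - V * R)}

/-- The `i`-th largest singular value of a real matrix. -/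
noncomputable def singVal {n m : ℕ} (A : Matrix (Fin n) (Fin m) ℝ) (i : Fin m) : ℝ :=
  Real.sqrt ((Matrix.isHermitian_conjTranspose_mul_self A).eigenvalues
    ((Tuple.sort (Matrix.isHermitian_conjTranspose_mul_self A).eigenvalues) i.rev))

section MatrixNorms

variable {m k q : Type*} [Fintype m] [Fintype k] [Fintype q]

lemma vnorm_eq_norm (v : m → ℝ) : vnorm v = ‖WithLp.toLp 2 v‖ := by
  simp [vnorm, EuclideanSpace.norm_eq, sq_abs]

lemma vnorm_nonneg (v : m → ℝ) : 0 ≤ vnorm v := Real.sqrt_nonneg _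

lemma vnorm_sq (v : m → ℝ) : vnorm v ^ 2 = ∑ i, v i ^ 2 :=
  Real.sq_sqrt (Finset.sum_nonneg fun _ _ => sq_nonneg _)

lemma vnorm_smul (c : ℝ) (v : m → ℝ) : vnorm (c • v) = |c| * vnorm v := by
  rw [vnorm_eq_norm, vnorm_eq_norm, WithLp.toLp_smul, norm_smul, Real.norm_eq_abs]

lemma vnorm_pos {v : m → ℝ} (hv : v ≠ 0) : 0 < vnorm v := by
  rw [vnorm_eq_norm]
  exact norm_pos_iff.mpr fun h => hv (by simpa using congrArg WithLp.ofLp h)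

lemma frob_nonneg (A : Matrix m k ℝ) : 0 ≤ frob A := Real.sqrt_nonneg _

lemma frob_sq_eq_sum_vnorm_sq (A : Matrix m k ℝ) : frob A ^ 2 = ∑ i, vnorm (A i) ^ 2 := by
  rw [frob, Real.sq_sqrt (by positivity)]
  simp only [vnorm_sq]

section Frobenius

open scoped Matrix.Norms.Frobenius

lemma frob_eq_frobenius_norm (A : Matrix m k ℝ) : frob A = ‖A‖ := by
  rw [frobenius_norm_def, ← Real.sqrt_eq_rpow]
  simp [frob, sq_abs]

lemma frob_add_le (A B : Matrix m k ℝ) : frob (A + B) ≤ frob A + frob B := by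
  simpa only [frob_eq_frobenius_norm] using norm_add_le A B

lemma frob_transpose (A : Matrix m k ℝ) : frob Aᵀ = frob A := by
  simp only [frob_eq_frobenius_norm, frobenius_norm_transpose]

lemma frob_mul_le (A : Matrix m k ℝ) (B : Matrix k q ℝ) : frob (A * B) ≤ frob A * frob B := by
  simpa only [frob_eq_frobenius_norm] using frobenius_norm_mul A B

end Frobenius

lemma specNorm_nonneg (A : Matrix m k ℝ) : 0 ≤ specNorm A :=
  Real.sSup_nonneg fun _ ⟨_, _, hc⟩ => hc ▸ vnorm_nonneg _

lemma sigMin_nonneg (A : Matrix m k ℝ) : 0 ≤ sigMin A :=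
  Real.sInf_nonneg fun _ ⟨_, _, hc⟩ => hc ▸ vnorm_nonneg _

lemma vnorm_mulVec_le_frob (A : Matrix m k ℝ) (x : k → ℝ) :
    vnorm (A *ᵥ x) ≤ frob A * vnorm x := by
  have hsq : ∑ i, (A *ᵥ x) i ^ 2 ≤ (∑ i, ∑ j, A i j ^ 2) * ∑ j, x j ^ 2 := by
    rw [Finset.sum_mul]
    exact Finset.sum_le_sum fun i _ => Finset.sum_mul_sq_le_sq_mul_sq _ (A i) x
  rw [frob, vnorm, vnorm, ← Real.sqrt_mul (by positivity)]
  exact Real.sqrt_le_sqrt hsq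

lemma bddAbove_specNorm_set (A : Matrix m k ℝ) :
    BddAbove {c | ∃ x : k → ℝ, vnorm x = 1 ∧ c = vnorm (A *ᵥ x)} := by
  refine ⟨frob A, ?_⟩
  rintro _ ⟨x, hx, rfl⟩
  simpa [hx] using vnorm_mulVec_le_frob A x

lemma sigMin_le_specNorm (A : Matrix m k ℝ) : sigMin A ≤ specNorm A := by
  rcases isEmpty_or_nonempty k with hk | hk
  · have hempty : {c | ∃ x : k → ℝ, vnorm x = 1 ∧ c = vnorm (A *ᵥ x)} = ∅ := by
      ext c
      simp [vnorm, Subsingleton.elim _ (0 : k → ℝ)]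
    simp only [sigMin, specNorm, hempty, Real.sInf_empty, Real.sSup_empty, le_refl]
  · classical
    obtain ⟨i⟩ := hk
    have hunit : vnorm (Pi.single i 1 : k → ℝ) = 1 := by
      simp [vnorm, Pi.single_apply]
    exact csInf_le_csSup ⟨_, Pi.single i 1, hunit, rfl⟩
      ⟨0, fun _ ⟨_, _, hc⟩ => hc ▸ vnorm_nonneg _⟩ (bddAbove_specNorm_set A)

lemma vnorm_mulVec_le_specNorm (A : Matrix m k ℝ) (x : k → ℝ) :
    vnorm (A *ᵥ x) ≤ specNorm A * vnorm x := by
  rcases eq_or_ne x 0 with rfl | hx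
  · simp [vnorm]
  set u := (vnorm x)⁻¹ • x
  have hpos := vnorm_pos hx
  have hu : vnorm u = 1 := by
    rw [vnorm_smul, abs_of_pos (inv_pos.mpr hpos), inv_mul_cancel₀ hpos.ne']
  have hxu : x = vnorm x • u := by rw [smul_smul, mul_inv_cancel₀ hpos.ne', one_smul]
  calc vnorm (A *ᵥ x) = vnorm x * vnorm (A *ᵥ u) := by
        rw [hxu, mulVec_smul, vnorm_smul, abs_of_pos hpos, ← hxu]
    _ ≤ vnorm x * specNorm A :=
        mul_le_mul_of_nonneg_left (le_csSup (bddAbove_specNorm_set A) ⟨u, hu, rfl⟩) hpos.le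
    _ = specNorm A * vnorm x := mul_comm _ _

lemma frob_mul_transpose_le (M : Matrix m k ℝ) (N : Matrix q k ℝ) :
    frob (M * Nᵀ) ≤ specNorm N * frob M := by
  have hrow : ∀ i, (M * Nᵀ) i = N *ᵥ M i := fun i => by
    ext j
    simp [mul_apply, mulVec, dotProduct, mul_comm]
  rw [← pow_le_pow_iff_left₀ (frob_nonneg _)
    (mul_nonneg (specNorm_nonneg N) (frob_nonneg M)) two_ne_zero, mul_pow,
    frob_sq_eq_sum_vnorm_sq, frob_sq_eq_sum_vnorm_sq, Finset.mul_sum]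
  gcongr with i
  rw [hrow, ← mul_pow]
  exact pow_le_pow_left₀ (vnorm_nonneg _) (vnorm_mulVec_le_specNorm N (M i)) 2

end MatrixNorms

section Orthogonal

variable {m k : Type*} [Fintype m] [Fintype k] [DecidableEq k]

lemma vnorm_mulVec_of_transpose_mul_self_eq_one {R : Matrix k k ℝ} (hR : Rᵀ * R = 1)
    (x : k → ℝ) : vnorm (R *ᵥ x) = vnorm x := by
  have hdot : (R *ᵥ x) ⬝ᵥ (R *ᵥ x) = x ⬝ᵥ x := by
    rw [dotProduct_mulVec, ← vecMul_transpose, vecMul_vecMul, hR, vecMul_one]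
  simpa only [vnorm, dotProduct, sq] using congrArg Real.sqrt hdot

lemma specNorm_mul_of_transpose_mul_self_eq_one (A : Matrix m k ℝ) {R : Matrix k k ℝ}
    (hR : Rᵀ * R = 1) : specNorm (A * R) = specNorm A := by
  have hR' : Rᵀᵀ * Rᵀ = 1 := by rw [transpose_transpose, mul_eq_one_comm.mp hR]
  unfold specNorm
  congr 1
  ext c
  constructor
  · rintro ⟨x, hx, rfl⟩
    exact ⟨R *ᵥ x, by rw [vnorm_mulVec_of_transpose_mul_self_eq_one hR, hx], by
      rw [mulVec_mulVec]⟩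
  · rintro ⟨y, hy, rfl⟩
    refine ⟨Rᵀ *ᵥ y, by rw [vnorm_mulVec_of_transpose_mul_self_eq_one hR', hy], ?_⟩
    rw [mulVec_mulVec, Matrix.mul_assoc, mul_eq_one_comm.mp hR, Matrix.mul_one]

lemma frob_mul_transpose_sub_le (U V : Matrix m k ℝ) {R : Matrix k k ℝ} (hR : Rᵀ * R = 1) :
    frob (U * Uᵀ - V * Vᵀ) ≤ 2 * specNorm V * frob (U - V * R) + frob (U - V * R) ^ 2 := by
  have hNN : (V * R) * (V * R)ᵀ = V * Vᵀ := by
    rw [transpose_mul, Matrix.mul_assoc, ← Matrix.mul_assoc R, mul_eq_one_comm.mp hR,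
      Matrix.one_mul]
  have hcross : frob ((U - V * R) * (V * R)ᵀ) ≤ specNorm V * frob (U - V * R) := by
    simpa only [specNorm_mul_of_transpose_mul_self_eq_one V hR] using
      frob_mul_transpose_le (U - V * R) (V * R)
  generalize V * R = N at hNN hcross ⊢
  obtain ⟨Δ, rfl⟩ : ∃ Δ, U = Δ + N := ⟨U - N, (sub_add_cancel U N).symm⟩
  rw [add_sub_cancel_right] at hcross ⊢
  have hdecomp : (Δ + N) * (Δ + N)ᵀ - V * Vᵀ = Δ * Nᵀ + (Δ * Nᵀ)ᵀ + Δ * Δᵀ := by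
    rw [← hNN, transpose_mul, transpose_transpose, transpose_add, Matrix.add_mul,
      Matrix.mul_add, Matrix.mul_add]
    abel
  calc frob ((Δ + N) * (Δ + N)ᵀ - V * Vᵀ)
      ≤ frob (Δ * Nᵀ) + frob (Δ * Nᵀ)ᵀ + frob (Δ * Δᵀ) := by
        rw [hdecomp]
        exact (frob_add_le _ _).trans (add_le_add_left (frob_add_le _ _) _)
    _ ≤ specNorm V * frob Δ + specNorm V * frob Δ + frob Δ * frob Δ := by
        rw [frob_transpose]
        gcongr
        exact (frob_mul_le Δ Δᵀ).trans_eq (by rw [frob_transpose])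
    _ = 2 * specNorm V * frob Δ + frob Δ ^ 2 := by ring

lemma frob_mul_transpose_sub_le_FDist (U V : Matrix m k ℝ) :
    frob (U * Uᵀ - V * Vᵀ) ≤ 2 * specNorm V * FDist U V + FDist U V ^ 2 := by
  -- The infimum need not be attained, but `f` is monotone and continuous on `S`.
  set S := {c | ∃ R : Matrix k k ℝ, Rᵀ * R = 1 ∧ c = frob (U - V * R)}
  have hS : S.Nonempty := ⟨_, 1, by simp, rfl⟩
  have hS0 : S ⊆ Set.Ici 0 := fun _ ⟨_, _, hc⟩ => hc ▸ frob_nonneg _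
  set f : ℝ → ℝ := fun d => 2 * specNorm V * d + d ^ 2
  have hf : MonotoneOn f S := fun a ha b _ hab => by
    have := hS0 ha
    dsimp only [f]
    gcongr
    exact mul_nonneg zero_le_two (specNorm_nonneg V)
  change _ ≤ f (sInf S)
  rw [hf.map_csInf_of_continuousWithinAt (by fun_prop) hS ⟨0, hS0⟩]
  exact le_csInf (hS.image f) fun _ ⟨_, ⟨R, hR, hc⟩, hfc⟩ =>
    hfc ▸ hc ▸ frob_mul_transpose_sub_le U V hR

end Orthogonal

theorem stmt2_general {n r : ℕ} (U Ustar : Matrix (Fin n) (Fin r) ℝ) (ρ : ℝ)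
    (hdist : FDist U Ustar ≤ ρ * sigMin Ustar) :
    frob (U * Uᵀ - Ustar * Ustarᵀ) ≤ (2 + ρ) * ρ * specNorm Ustar * sigMin Ustar := by
  have hs := specNorm_nonneg Ustar
  have hσ := sigMin_nonneg Ustar
  have hσs := sigMin_le_specNorm Ustar
  have hD : 0 ≤ FDist U Ustar := Real.sInf_nonneg fun _ ⟨_, _, hc⟩ => hc ▸ frob_nonneg _
  calc frob (U * Uᵀ - Ustar * Ustarᵀ)
      ≤ 2 * specNorm Ustar * FDist U Ustar + FDist U Ustar ^ 2 :=
        frob_mul_transpose_sub_le_FDist U Ustar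
    _ ≤ 2 * specNorm Ustar * (ρ * sigMin Ustar) + (ρ * sigMin Ustar) ^ 2 := by gcongr
    _ ≤ (2 + ρ) * ρ * specNorm Ustar * sigMin Ustar := by
        nlinarith [mul_le_mul_of_nonneg_left hσs (mul_nonneg (sq_nonneg ρ) hσ)]

/-- If `Dist(U, U*) ≤ ρ σ_r(U*)`, then
`‖UUᵀ - U*(U*)ᵀ‖_F ≤ (2+ρ) ρ ‖U*‖₂ σ_r(U*)`. -/
theorem stmt2 {n r : ℕ} (U Ustar : Matrix (Fin n) (Fin r) ℝ) (ρ : ℝ)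
    (hρ : 0 < ρ) (hrank : Ustar.rank = r)
    (hdist : FDist U Ustar ≤ ρ * sigMin Ustar) :
    frob (U * Uᵀ - Ustar * Ustarᵀ) ≤ (2 + ρ) * ρ * specNorm Ustar * sigMin Ustar :=
  stmt2_general U Ustar ρ hdist
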